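/- arXiv:1007.4806 — 5 statements merged into one kernel-verified Lean document; each statement's English description precedes it below -/
import Mathlib

section
/- A twice continuously differentiable S-shaped function f : [0,∞) → [0,∞) (increasing, f(0) > 0, bounded, with f'' > 0 on (0, x̄) and f'' < 0 on (x̄, ∞) for a unique inflection point x̄) has at most three fixed points in [0,∞). -/
/-- A twice continuously differentiable S-shaped function `f : [0,∞) → [0,∞)`
(increasing, `f 0 > 0`, bounded, with `f'' > 0` on `(0, x̄)` and `f'' < 0` on
`(x̄, ∞)` for an inflection point `x̄ ∈ (0,∞)`) has at most three fixed points
in `[0,∞)`. -/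
theorem stmt4 (f : ℝ → ℝ) (hf : ContDiff ℝ 2 f)
    (hmap : ∀ x ≥ (0 : ℝ), 0 ≤ f x)
    (hmono : StrictMonoOn f (Set.Ici 0))
    (h0 : 0 < f 0)
    (hbdd : BddAbove (f '' Set.Ici 0))
    (xbar : ℝ) (hxbar : 0 < xbar)
    (hconvex : ∀ x ∈ Set.Ioo 0 xbar, 0 < deriv (deriv f) x)
    (hconcave : ∀ x ∈ Set.Ioi xbar, deriv (deriv f) x < 0) :
    {x : ℝ | 0 ≤ x ∧ f x = x}.encard ≤ 3 := by
  classical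
  by_contra hlt
  push_neg at hlt
  have h4 : (4 : ℕ∞) ≤ {x : ℝ | 0 ≤ x ∧ f x = x}.encard := by
    exact Order.add_one_le_of_lt hlt
  obtain ⟨t, hts, htc⟩ := Set.exists_subset_encard_eq h4
  have htfin : t.Finite := Set.finite_of_encard_eq_coe htc
  have hcard : htfin.toFinset.card = 4 := by
    have := htfin.encard_eq_coe_toFinset_card
    rw [htc] at this
    exact_mod_cast this.symm
  set e := htfin.toFinset.orderIsoOfFin hcard with he
  have hmem : ∀ i : Fin 4, (e i : ℝ) ∈ t := fun i => by
    exact htfin.mem_toFinset.mp (e i).2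
  have hstrict : ∀ i j : Fin 4, i < j → (e i : ℝ) < (e j : ℝ) := fun i j hij => by
    exact_mod_cast (e.strictMono hij)
  -- fixed points
  have hfix : ∀ i : Fin 4, 0 ≤ (e i : ℝ) ∧ f (e i) = (e i : ℝ) := fun i => hts (hmem i)
  have hdiff : Differentiable ℝ f := hf.differentiable (by norm_num)
  have hderiv_cont : Continuous (deriv f) := hf.continuous_deriv (by norm_num)
  -- Rolle: between consecutive fixed points, deriv f = 1
  have rolle : ∀ i j : Fin 4, i < j →
      ∃ c ∈ Set.Ioo (e i : ℝ) (e j : ℝ), deriv f c = 1 := by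
    intro i j hij
    set g : ℝ → ℝ := fun x => f x - x with hg
    have hab : (e i : ℝ) < (e j : ℝ) := hstrict i j hij
    have hgc : ContinuousOn g (Set.Icc (e i : ℝ) (e j : ℝ)) :=
      (hdiff.continuous.sub continuous_id).continuousOn
    have hgeq : g (e i) = g (e j) := by
      simp [hg, (hfix i).2, (hfix j).2]
    obtain ⟨c, hc, hc0⟩ := exists_deriv_eq_zero hab hgc hgeq
    refine ⟨c, hc, ?_⟩
    have : deriv g c = deriv f c - 1 := by
      rw [hg]
      have := deriv_fun_sub (hdiff c) (differentiable_id.differentiableAt (𝕜 := ℝ))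
      simpa using this
    rw [this] at hc0
    linarith
  obtain ⟨c1, hc1, hd1⟩ := rolle 0 1 (by decide)
  obtain ⟨c2, hc2, hd2⟩ := rolle 1 2 (by decide)
  obtain ⟨c3, hc3, hd3⟩ := rolle 2 3 (by decide)
  have h01 : (0 : ℝ) ≤ (e 0 : ℝ) := (hfix 0).1
  have hc1pos : 0 ≤ c1 := le_of_lt (lt_of_le_of_lt h01 hc1.1)
  have hc12 : c1 < c2 := lt_trans hc1.2 hc2.1
  have hc23 : c2 < c3 := lt_trans hc2.2 hc3.1
  -- deriv f strictly mono on [0, xbar], strictly anti on [xbar, ∞)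
  have hmonoD : StrictMonoOn (deriv f) (Set.Icc 0 xbar) := by
    apply StrictMonoOn.mono (s := Set.Icc 0 xbar) ?_ (le_refl _)
    exact strictMonoOn_of_deriv_pos (convex_Icc 0 xbar) hderiv_cont.continuousOn
      (by
        intro x hx
        rw [interior_Icc] at hx
        exact hconvex x hx)
  have hantiD : StrictAntiOn (deriv f) (Set.Ici xbar) := by
    exact strictAntiOn_of_deriv_neg (convex_Ici xbar) hderiv_cont.continuousOn
      (by
        intro x hx
        rw [interior_Ici] at hx
        exact hconcave x hx)
  rcases le_total c2 xbar with h | h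
  · have h1 : c1 ∈ Set.Icc (0:ℝ) xbar := ⟨hc1pos, le_of_lt (lt_of_lt_of_le hc12 h)⟩
    have h2 : c2 ∈ Set.Icc (0:ℝ) xbar := ⟨le_trans hc1pos (le_of_lt hc12), h⟩
    have := hmonoD h1 h2 hc12
    rw [hd1, hd2] at this
    exact lt_irrefl _ this
  · have h2 : c2 ∈ Set.Ici xbar := h
    have h3 : c3 ∈ Set.Ici xbar := le_trans h (le_of_lt hc23)
    have := hantiD h2 h3 hc23
    rw [hd2, hd3] at this
    exact lt_irrefl _ this
end

section
/- If 0 < γ ≤ e, then H_γ(z) = γ·exp(−γ·exp(−z)) has exactly one fixed point z₀ on [0,∞), and if γ < e then z₀ < 1. -/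
open Real

lemma ue_le (u : ℝ) : u * Real.exp (-u) ≤ Real.exp (-1) := by
  have h := Real.add_one_le_exp (u - 1)
  have : u ≤ Real.exp (u - 1) := by linarith
  calc u * Real.exp (-u) ≤ Real.exp (u - 1) * Real.exp (-u) := by
        exact mul_le_mul_of_nonneg_right this (Real.exp_pos _).le
    _ = Real.exp (-1) := by rw [← Real.exp_add]; ring_nf

lemma ue_lt (u : ℝ) (hu : u ≠ 1) : u * Real.exp (-u) < Real.exp (-1) := by
  have h := Real.add_one_lt_exp (x := u - 1) (by intro h; apply hu; linarith)
  have : u < Real.exp (u - 1) := by linarith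
  calc u * Real.exp (-u) < Real.exp (u - 1) * Real.exp (-u) := by
        exact mul_lt_mul_of_pos_right this (Real.exp_pos _)
    _ = Real.exp (-1) := by rw [← Real.exp_add]; ring_nf

lemma hasDerivAt_H (γ z : ℝ) :
    HasDerivAt (fun z => γ * Real.exp (-γ * Real.exp (-z)))
      (γ * (γ * Real.exp (-z) * Real.exp (-(γ * Real.exp (-z))))) z := by
  have h0 : HasDerivAt (fun z : ℝ => -z) (-1) z := (hasDerivAt_id z).neg
  have h1 := h0.exp
  have h2 := (h1.const_mul (-γ)).exp.const_mul γ
  refine h2.congr_deriv ?_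
  have : -γ * Real.exp (-z) = -(γ * Real.exp (-z)) := by ring
  rw [this]
  ring

-- the derivative value, abbreviated
noncomputable def D (γ z : ℝ) : ℝ := γ * (γ * Real.exp (-z) * Real.exp (-(γ * Real.exp (-z))))

lemma D_le_c (γ z : ℝ) (h0 : 0 ≤ γ) : D γ z ≤ γ * Real.exp (-1) := by
  have := ue_le (γ * Real.exp (-z))
  unfold D
  calc γ * (γ * Real.exp (-z) * Real.exp (-(γ * Real.exp (-z))))
      ≤ γ * Real.exp (-1) := by
        apply mul_le_mul_of_nonneg_left _ h0
        exact this

lemma D_le_one (γ z : ℝ) (h0 : 0 ≤ γ) (he : γ ≤ Real.exp 1) : D γ z ≤ 1 := by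
  have h1 := D_le_c γ z h0
  have h2 : γ * Real.exp (-1) ≤ Real.exp 1 * Real.exp (-1) :=
    mul_le_mul_of_nonneg_right he (Real.exp_pos _).le
  have h3 : Real.exp 1 * Real.exp (-1) = 1 := by rw [← Real.exp_add]; norm_num
  linarith

lemma D_lt_one (γ z : ℝ) (h0 : 0 < γ) (he : γ ≤ Real.exp 1) (hz : z ≠ 1) : D γ z < 1 := by
  set u := γ * Real.exp (-z) with hu
  have hupos : 0 < u := mul_pos h0 (Real.exp_pos _)
  have h3 : Real.exp 1 * Real.exp (-1) = 1 := by rw [← Real.exp_add]; norm_num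
  by_cases h : u = 1
  · -- then γ = exp z ≠ exp 1
    have hγ : γ = Real.exp z := by
      have : γ * Real.exp (-z) * Real.exp z = 1 * Real.exp z := by rw [← hu, h]
      rw [mul_assoc, ← Real.exp_add] at this
      simpa using this
    have hγlt : γ < Real.exp 1 := by
      rcases lt_or_eq_of_le he with h' | h'
      · exact h'
      · exfalso; apply hz; apply Real.exp_injective; rw [← hγ, h']
    unfold D
    rw [← hu, h]
    calc γ * (1 * Real.exp (-1)) = γ * Real.exp (-1) := by ring
      _ < Real.exp 1 * Real.exp (-1) := mul_lt_mul_of_pos_right hγlt (Real.exp_pos _)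
      _ = 1 := h3
  · have := ue_lt u h
    unfold D
    rw [← hu]
    calc γ * (u * Real.exp (-u)) < γ * Real.exp (-1) := mul_lt_mul_of_pos_left this h0
      _ ≤ Real.exp 1 * Real.exp (-1) := mul_le_mul_of_nonneg_right he (Real.exp_pos _).le
      _ = 1 := h3

/-- If `0 < γ ≤ e` then `H_γ(z) = γ·exp(−γ·exp(−z))` has exactly one fixed point
`z₀` in `[0,∞)`, and if moreover `γ < e` then `z₀ < 1`. -/
theorem stmt7 (γ : ℝ) (h0 : 0 < γ) (he : γ ≤ Real.exp 1) :
    (∃! z₀ : ℝ, 0 ≤ z₀ ∧ γ * Real.exp (-γ * Real.exp (-z₀)) = z₀) ∧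
    (γ < Real.exp 1 →
      ∀ z₀ : ℝ, 0 ≤ z₀ ∧ γ * Real.exp (-γ * Real.exp (-z₀)) = z₀ → z₀ < 1) := by
  set f : ℝ → ℝ := fun z => γ * Real.exp (-γ * Real.exp (-z)) with hf
  -- existence via IVT on [0, γ]
  have hcont : ContinuousOn (fun z => f z - z) (Set.Icc 0 γ) := by
    apply Continuous.continuousOn
    fun_prop
  have hg0 : 0 < f 0 - 0 := by
    simp only [hf]
    simp
    positivity
  have hgγ : f γ - γ < 0 := by
    have : Real.exp (-γ * Real.exp (-γ)) < 1 := by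
      rw [Real.exp_lt_one_iff]
      have := Real.exp_pos (-γ); nlinarith
    have h2 : γ * Real.exp (-γ * Real.exp (-γ)) < γ * 1 := mul_lt_mul_of_pos_left this h0
    simp only [hf]; linarith
  have hsub := intermediate_value_Icc' (le_of_lt h0) hcont
  have h0mem : (0:ℝ) ∈ Set.Icc (f γ - γ) (f 0 - 0) := ⟨le_of_lt hgγ, le_of_lt hg0⟩
  obtain ⟨z₀, hz₀mem, hz₀⟩ := hsub h0mem
  have hz₀fix : f z₀ = z₀ := by linarith [sub_eq_zero.mp hz₀]
  -- uniqueness helper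
  have key : ∀ a b : ℝ, a < b → f a = a → f b = b → False := by
    intro a b hab ha hb
    set G : ℝ → ℝ := fun z => z - f z with hG
    have hGd : ∀ z, HasDerivAt G (1 - D γ z) z := by
      intro z
      exact (hasDerivAt_id z).sub (hasDerivAt_H γ z)
    have hGmono : Monotone G := by
      apply monotone_of_deriv_nonneg
      · exact fun z => ((hGd z).differentiableAt)
      · intro z
        rw [(hGd z).deriv]
        linarith [D_le_one γ z h0.le he]
    have hGa : G a = 0 := by simp [hG, ha]
    have hGb : G b = 0 := by simp [hG, hb]
    have hGzero : ∀ z ∈ Set.Ioo a b, G z = 0 := by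
      intro z hz
      have h1 := hGmono hz.1.le
      have h2 := hGmono hz.2.le
      linarith
    have interior_eq_one : ∀ z ∈ Set.Ioo a b, z = 1 := by
      intro z hz
      have hev : G =ᶠ[nhds z] (fun _ => (0:ℝ)) := by
        filter_upwards [Ioo_mem_nhds hz.1 hz.2] with x hx
        exact hGzero x hx
      have hGd0 : HasDerivAt G 0 z := by
        exact (hasDerivAt_const z (0:ℝ)).congr_of_eventuallyEq hev
      have := (hGd z).unique hGd0
      by_contra hne
      have := D_lt_one γ z h0 he hne
      linarith
    have z1 : a + (b-a)/3 ∈ Set.Ioo a b := by constructor <;> nlinarith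
    have z2 : a + 2*(b-a)/3 ∈ Set.Ioo a b := by constructor <;> nlinarith
    have e1 := interior_eq_one _ z1
    have e2 := interior_eq_one _ z2
    nlinarith
  constructor
  · refine ⟨z₀, ⟨hz₀mem.1, hz₀fix⟩, ?_⟩
    intro y ⟨hy0, hyfix⟩
    rcases lt_trichotomy y z₀ with h | h | h
    · exact absurd (key y z₀ h hyfix hz₀fix) (fun x => x)
    · exact h
    · exact absurd (key z₀ y h hz₀fix hyfix) (fun x => x)
  · intro hlt z hz
    obtain ⟨hz0, hzfix⟩ := hz
    by_contra hge
    push_neg at hge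
    set c : ℝ := γ * Real.exp (-1) with hc
    have h3 : Real.exp 1 * Real.exp (-1) = 1 := by rw [← Real.exp_add]; norm_num
    have hc1 : c < 1 := by
      calc c < Real.exp 1 * Real.exp (-1) := mul_lt_mul_of_pos_right hlt (Real.exp_pos _)
        _ = 1 := h3
    have hcpos : 0 < c := mul_pos h0 (Real.exp_pos _)
    set F : ℝ → ℝ := fun w => c * w - f w with hF
    have hFd : ∀ w, HasDerivAt F (c - D γ w) w := by
      intro w
      have h1 : HasDerivAt (fun x : ℝ => c * x) c w := by
        simpa using (hasDerivAt_id w).const_mul c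
      exact h1.sub (hasDerivAt_H γ w)
    have hFmono : Monotone F := by
      apply monotone_of_deriv_nonneg
      · exact fun w => ((hFd w).differentiableAt)
      · intro w
        rw [(hFd w).deriv]
        linarith [D_le_c γ w h0.le]
    have hmono := hFmono hge
    -- F 1 ≤ F z : c - f 1 ≤ c z - z
    have hf1lt : f 1 < 1 := by
      -- f 1 = γ * exp (-c), and γ < exp c
      have hcne : c - 1 ≠ 0 := by intro h; rw [sub_eq_zero] at h; linarith
      have h4 := Real.add_one_lt_exp hcne
      have h5 : c < Real.exp (c - 1) := by linarith
      have h6 : c * Real.exp 1 < Real.exp c := by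
        have := mul_lt_mul_of_pos_right h5 (Real.exp_pos 1)
        rwa [← Real.exp_add, sub_add_cancel] at this
      have h7 : γ < Real.exp c := by
        have : c * Real.exp 1 = γ := by
          rw [hc]; rw [mul_comm γ, mul_assoc, Real.exp_neg]
          field_simp
        linarith [h6, this ▸ h6]
      have : γ * Real.exp (-c) < Real.exp c * Real.exp (-c) :=
        mul_lt_mul_of_pos_right h7 (Real.exp_pos _)
      rw [← Real.exp_add] at this
      simp only [hf]
      have hcexp : -γ * Real.exp (-1) = -c := by rw [hc]; ring
      rw [hcexp]
      simpa using this
    have hF1 : F 1 = c - f 1 := by simp [hF]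
    have hFz : F z = c * z - z := by
      have : f z = z := hzfix
      simp [hF, this]
    rw [hF1, hFz] at hmono
    nlinarith
end

section
/- If γ > e, then H_γ(z) = γ·exp(−γ·exp(−z)) has three distinct fixed points z₋ < z₀ < z₊ on [0,∞) satisfying 0 ≤ z₋ ≤ log γ − log(log γ) < z₀ ≤ log γ < z₊. -/
open Real

/-- If `γ > e` then `H_γ(z) = γ·exp(−γ·exp(−z))` has three distinct fixed points
`z₋ < z₀ < z₊` in `[0,∞)` with
`0 ≤ z₋ ≤ log γ − log(log γ) < z₀ ≤ log γ < z₊`. -/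
theorem stmt8 (γ : ℝ) (hγ : Real.exp 1 < γ) :
    ∃ zm z0 zp : ℝ,
      zm < z0 ∧ z0 < zp ∧
      γ * Real.exp (-γ * Real.exp (-zm)) = zm ∧
      γ * Real.exp (-γ * Real.exp (-z0)) = z0 ∧
      γ * Real.exp (-γ * Real.exp (-zp)) = zp ∧
      0 ≤ zm ∧ zm ≤ Real.log γ - Real.log (Real.log γ) ∧
      Real.log γ - Real.log (Real.log γ) < z0 ∧ z0 ≤ Real.log γ ∧
      Real.log γ < zp := by
  have hγ0 : 0 < γ := lt_trans (exp_pos 1) hγ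
  set L := Real.log γ with hLdef
  have hL1 : 1 < L := (Real.lt_log_iff_exp_lt hγ0).2 hγ
  have hL0 : 0 < L := lt_trans one_pos hL1
  have hexpL : Real.exp L = γ := Real.exp_log hγ0
  set a := L - Real.log L with hadef
  have ha1 : 1 < a := by
    have := Real.log_lt_sub_one_of_pos hL0 (ne_of_gt hL1)
    simp only [hadef]; linarith
  have haL : a < L := by
    have : 0 < Real.log L := Real.log_pos hL1
    simp only [hadef]; linarith
  have hLγ : L < γ := by
    have := Real.log_lt_sub_one_of_pos hγ0 (by nlinarith [Real.exp_pos 1, Real.add_one_le_exp 1])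
    linarith
  set f : ℝ → ℝ := fun z => γ * Real.exp (-γ * Real.exp (-z)) - z with hf
  have hcont : Continuous f := by fun_prop
  -- f 0 > 0
  have hf0 : 0 < f 0 := by
    simp only [hf, neg_zero, Real.exp_zero, mul_one, sub_zero]
    positivity
  -- exp (-a) = L / γ
  have hexpa : Real.exp (-a) = L / γ := by
    rw [hadef, neg_sub, Real.exp_sub, Real.exp_log hL0, hexpL]
  -- f a = 1 - a < 0
  have hfa : f a < 0 := by
    have : f a = 1 - a := by
      simp only [hf, hexpa]
      rw [show -γ * (L / γ) = -L by field_simp]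
      rw [Real.exp_neg, hexpL]
      field_simp
    rw [this]; linarith
  -- f L = γ * exp (-1) - L > 0
  have hfL : 0 < f L := by
    have h1 : f L = γ * Real.exp (-1) - L := by
      simp only [hf]
      rw [Real.exp_neg, hexpL, show -γ * γ⁻¹ = -1 by field_simp]
    rw [h1]
    -- show L < γ * exp (-1)
    have ht1 : 1 < γ * Real.exp (-1) := by
      rw [Real.exp_neg, ← div_eq_mul_inv, lt_div_iff₀ (Real.exp_pos 1), one_mul]
      exact hγ
    have hlogt := Real.log_lt_sub_one_of_pos (lt_trans one_pos ht1) (ne_of_gt ht1)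
    have hlogeq : Real.log (γ * Real.exp (-1)) = L - 1 := by
      rw [Real.log_mul (ne_of_gt hγ0) (ne_of_gt (Real.exp_pos _)), Real.log_exp]
      ring
    rw [hlogeq] at hlogt
    linarith
  -- f γ < 0
  have hfγ : f γ < 0 := by
    have h1 : Real.exp (-γ * Real.exp (-γ)) < 1 := by
      rw [Real.exp_lt_one_iff]
      have := Real.exp_pos (-γ)
      nlinarith
    simp only [hf]
    nlinarith
  -- IVT three times
  have hcm : ContinuousOn f (Set.Icc 0 a) := hcont.continuousOn
  obtain ⟨zm, hzm_mem, hzm⟩ := intermediate_value_Ioo' (le_of_lt (lt_trans one_pos ha1)) hcm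
    (Set.mem_Ioo.2 ⟨hfa, hf0⟩)
  obtain ⟨z0, hz0_mem, hz0⟩ := intermediate_value_Ioo (le_of_lt haL) hcont.continuousOn
    (Set.mem_Ioo.2 ⟨hfa, hfL⟩)
  obtain ⟨zp, hzp_mem, hzp⟩ := intermediate_value_Ioo' (le_of_lt hLγ) hcont.continuousOn
    (Set.mem_Ioo.2 ⟨hfγ, hfL⟩)
  obtain ⟨hzm0, hzma⟩ := hzm_mem
  obtain ⟨hz0a, hz0L⟩ := hz0_mem
  obtain ⟨hzpL, hzpγ⟩ := hzp_mem
  refine ⟨zm, z0, zp, lt_trans hzma hz0a, lt_of_le_of_lt hz0L.le hzpL, ?_, ?_, ?_,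
    hzm0.le, hzma.le, hz0a, hz0L.le, hzpL⟩
  · have := hzm; simp only [hf] at this; linarith
  · have := hz0; simp only [hf] at this; linarith
  · have := hzp; simp only [hf] at this; linarith
end

section
/- For every integer b ≥ 2 and every λ with 0 < λ < 8, the inequality (λ/(1+λ)) · bλ/(1 + λ/(1+1/b)^b)^b < 1 holds; equivalently, F₁(1/b) < 1/b where F₁(x) = (λ/(1+λ))·J₂(x). -/
private lemma binom3 (b : ℕ) (t : ℝ) (ht : 0 ≤ t) :
    1 + (b:ℝ)*t + ((b:ℝ)*((b:ℝ)-1)/2)*t^2 + ((b:ℝ)*((b:ℝ)-1)*((b:ℝ)-2)/6)*t^3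
      ≤ (1+t)^b := by
  induction b with
  | zero => norm_num
  | succ n ih =>
    have hb0 : (0:ℝ) ≤ (n:ℝ) := Nat.cast_nonneg n
    have h2 : (0:ℝ) ≤ (n:ℝ)*((n:ℝ)-1) := by
      rcases le_or_gt 1 (n:ℝ) with h | h
      · nlinarith
      · have : n = 0 := by exact_mod_cast Nat.lt_one_iff.mp (by exact_mod_cast h)
        simp [this]
    have h3 : (0:ℝ) ≤ (n:ℝ)*((n:ℝ)-1)*((n:ℝ)-2) := by
      rcases le_or_gt 2 (n:ℝ) with h | h
      · nlinarith
      · have hn : n < 2 := by exact_mod_cast h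
        interval_cases n <;> norm_num
    have hpos : (0:ℝ) ≤ 1 + (n:ℝ)*t + ((n:ℝ)*((n:ℝ)-1)/2)*t^2
        + ((n:ℝ)*((n:ℝ)-1)*((n:ℝ)-2)/6)*t^3 := by
      have := mul_nonneg h2 (sq_nonneg t)
      have := mul_nonneg h3 (pow_nonneg ht 3)
      nlinarith [mul_nonneg hb0 ht]
    have step : (1 + (n:ℝ)*t + ((n:ℝ)*((n:ℝ)-1)/2)*t^2
        + ((n:ℝ)*((n:ℝ)-1)*((n:ℝ)-2)/6)*t^3) * (1+t) ≤ (1+t)^(n+1) := by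
      rw [pow_succ]
      exact mul_le_mul_of_nonneg_right ih (by linarith)
    push_cast
    nlinarith [mul_nonneg h3 (pow_nonneg ht 4)]

set_option maxHeartbeats 1600000 in
/-- For every integer `b ≥ 2` and every `0 < λ < 8`,
`(λ/(1+λ)) · bλ/(1 + λ/(1+1/b)^b)^b < 1`; equivalently `F₁(1/b) < 1/b` where
`F₁(x) = (λ/(1+λ))·J₂(x)` and `J₂(x) = λ/(1 + λ/(1+x)^b)^b`. -/
theorem stmt10 (b : ℕ) (hb : 2 ≤ b) (lam : ℝ) (h0 : 0 < lam) (h8 : lam < 8) :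
    (lam / (1 + lam)) * ((b : ℝ) * lam / (1 + lam / (1 + 1 / (b : ℝ)) ^ b) ^ b) < 1 ∧
    (lam / (1 + lam)) * (lam / (1 + lam / (1 + 1 / (b : ℝ)) ^ b) ^ b) < 1 / (b : ℝ) := by
  have hb2 : (2:ℝ) ≤ (b:ℝ) := by exact_mod_cast hb
  have hbpos : (0:ℝ) < (b:ℝ) := by linarith
  have hcpos : (0:ℝ) < (1 + 1/(b:ℝ))^b := by positivity
  have hDpos : (0:ℝ) < (1 + lam/(1 + 1/(b:ℝ))^b)^b := by positivity
  have h1l : (0:ℝ) < 1 + lam := by linarith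
  have key : (b:ℝ) * lam^2 < (1+lam) * (1 + lam/(1 + 1/(b:ℝ))^b)^b := by
    rcases eq_or_lt_of_le hb with hb2' | hb3
    · -- b = 2
      obtain rfl : b = 2 := hb2'.symm
      have hc : (1 + 1/((2:ℕ):ℝ))^(2:ℕ) = 9/4 := by norm_num
      rw [hc]
      push_cast
      nlinarith [sq_nonneg lam, sq_nonneg (lam - 2), mul_pos h0 h0]
    · -- b ≥ 3
      have hb3' : (3:ℝ) ≤ (b:ℝ) := by exact_mod_cast hb3
      -- c ≤ (68/25 : ℝ)
      have hce : (1 + 1/(b:ℝ))^b ≤ (68/25 : ℝ) := by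
        have h1b : (0:ℝ) < 1/(b:ℝ) := by positivity
        have he := Real.add_one_le_exp (1/(b:ℝ))
        have h1 : (1 + 1/(b:ℝ))^b ≤ (Real.exp (1/(b:ℝ)))^b :=
          pow_le_pow_left₀ (by linarith) (by linarith) b
        have h2 : (Real.exp (1/(b:ℝ)))^b = Real.exp 1 := by
          rw [← Real.exp_nat_mul]
          congr 1
          field_simp
        have h3 : Real.exp 1 < 2.7182818286 := Real.exp_one_lt_d9
        calc (1 + 1/(b:ℝ))^b ≤ Real.exp 1 := h1.trans_eq h2
          _ ≤ (68/25 : ℝ) := by linarith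
      set s : ℝ := lam / (68/25 : ℝ) with hs
      have hs0 : 0 < s := by positivity
      have hsc : s ≤ lam / (1 + 1/(b:ℝ))^b := by
        apply div_le_div_of_nonneg_left h0.le hcpos hce
      have hbinom := binom3 b s hs0.le
      have hsum : (b:ℝ) * (s + s^2 + s^3/3) ≤
          1 + (b:ℝ)*s + ((b:ℝ)*((b:ℝ)-1)/2)*s^2 + ((b:ℝ)*((b:ℝ)-1)*((b:ℝ)-2)/6)*s^3 := by
        have e2 : (b:ℝ) * s^2 ≤ ((b:ℝ)*((b:ℝ)-1)/2) * s^2 := by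
          apply mul_le_mul_of_nonneg_right _ (sq_nonneg s)
          nlinarith
        have e3 : (b:ℝ)/3 * s^3 ≤ ((b:ℝ)*((b:ℝ)-1)*((b:ℝ)-2)/6) * s^3 := by
          apply mul_le_mul_of_nonneg_right _ (pow_nonneg hs0.le 3)
          have hq : (2:ℝ) ≤ ((b:ℝ)-1)*((b:ℝ)-2) := by nlinarith
          nlinarith [mul_le_mul_of_nonneg_left hq (by linarith : (0:ℝ) ≤ (b:ℝ))]
        nlinarith
      have hpow : (1+s)^b ≤ (1 + lam/(1 + 1/(b:ℝ))^b)^b :=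
        pow_le_pow_left₀ (by linarith) (by linarith) b
      have hD : (b:ℝ) * (s + s^2 + s^3/3) ≤ (1 + lam/(1 + 1/(b:ℝ))^b)^b := by
        calc (b:ℝ) * (s + s^2 + s^3/3) ≤ _ := hsum
          _ ≤ (1+s)^b := hbinom
          _ ≤ _ := hpow
      -- cubic inequality: lam^2 < (1+lam)*(s+s^2+s^3/3), s = lam/(68/25 : ℝ)
      have hcubic : lam^2 < (1+lam) * (s + s^2 + s^3/3) := by
        rw [hs]
        nlinarith [mul_nonneg (mul_nonneg h0.le h0.le) (sq_nonneg (lam - (67/50:ℝ))),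
          mul_nonneg h0.le (sq_nonneg (lam - (6717/5000:ℝ))), mul_pos h0 h0, h0]
      calc (b:ℝ) * lam^2 < (b:ℝ) * ((1+lam) * (s + s^2 + s^3/3)) := by
            exact mul_lt_mul_of_pos_left hcubic hbpos
        _ = (1+lam) * ((b:ℝ) * (s + s^2 + s^3/3)) := by ring
        _ ≤ (1+lam) * (1 + lam/(1 + 1/(b:ℝ))^b)^b := by
            exact mul_le_mul_of_nonneg_left hD (by linarith)
  constructor
  · rw [div_mul_div_comm, div_lt_one (by positivity)]
    nlinarith [key]
  · rw [div_mul_div_comm, div_lt_div_iff₀ (by positivity) hbpos]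
    nlinarith [key]
end

section
/- Let f : [0,∞) → [0,∞) be continuous and increasing, and let (X_n) be a nonnegative sequence with X_{n+1} ≤ f(X_{n−1}) for all n ≥ 1, and suppose f has a unique fixed point x*. Then limsup_n X_n ≤ x*. -/
/-- Let `f : [0,∞) → [0,∞)` be continuous, increasing and bounded with a unique
fixed point `x*`, and let `(X_n)` be a bounded nonnegative sequence with
`X_{n+2} ≤ f(X_n)` for all `n`.  Then `limsup X_n ≤ x*`. -/
theorem stmt18 (f : ℝ → ℝ)
    (hcont : ContinuousOn f (Set.Ici 0))
    (hmono : MonotoneOn f (Set.Ici 0))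
    (hmap : ∀ x ≥ (0 : ℝ), 0 ≤ f x)
    (hbdd : BddAbove (f '' Set.Ici 0))
    (xstar : ℝ) (hxs0 : 0 ≤ xstar) (hfix : f xstar = xstar)
    (huniq : ∀ x : ℝ, 0 ≤ x → f x = x → x = xstar)
    (X : ℕ → ℝ) (hX0 : ∀ n, 0 ≤ X n) (hXbdd : BddAbove (Set.range X))
    (hrec : ∀ n : ℕ, X (n + 2) ≤ f (X n)) :
    Filter.limsup X Filter.atTop ≤ xstar := by
  obtain ⟨M, hM⟩ := hXbdd
  have hMub : ∀ n, X n ≤ M := fun n => hM ⟨n, rfl⟩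
  have hbu : Filter.IsBoundedUnder (· ≤ ·) Filter.atTop X :=
    Filter.isBoundedUnder_of ⟨M, hMub⟩
  have hbl : Filter.IsBoundedUnder (· ≥ ·) Filter.atTop X :=
    Filter.isBoundedUnder_of ⟨0, hX0⟩
  set L := Filter.limsup X Filter.atTop with hLdef
  have hL0 : (0 : ℝ) ≤ L :=
    Filter.le_limsup_of_frequently_le
      ((Filter.Eventually.of_forall hX0).frequently) hbu
  -- Step 1: L ≤ f (L + ε) for all ε > 0
  have key : ∀ ε : ℝ, 0 < ε → L ≤ f (L + ε) := by
    intro ε hε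
    have h1 : ∀ᶠ n in Filter.atTop, X n < L + ε :=
      Filter.eventually_lt_of_limsup_lt (by linarith) hbu
    obtain ⟨N, hN⟩ := Filter.eventually_atTop.mp h1
    have h2 : ∀ᶠ n in Filter.atTop, X n ≤ f (L + ε) := by
      refine Filter.eventually_atTop.mpr ⟨N + 2, fun n hn => ?_⟩
      obtain ⟨m, rfl⟩ : ∃ m, n = m + 2 := ⟨n - 2, by omega⟩
      have hXm : X m < L + ε := hN m (by omega)
      have : f (X m) ≤ f (L + ε) :=
        hmono (hX0 m) (by simp; linarith) hXm.le
      exact (hrec m).trans this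
    have hcob : Filter.IsCoboundedUnder (· ≤ ·) Filter.atTop X :=
      hbl.isCoboundedUnder_le
    exact Filter.limsup_le_of_le hcob h2
  -- Step 2: L ≤ f L by continuity
  have hLfL : L ≤ f L := by
    have hct : ContinuousWithinAt f (Set.Ici 0) L := hcont L hL0
    have htend : Filter.Tendsto (fun ε : ℝ => f (L + ε))
        (nhdsWithin 0 (Set.Ioi 0)) (nhds (f L)) := by
      apply hct.tendsto.comp
      apply tendsto_nhdsWithin_of_tendsto_nhds_of_eventually_within _
      · have : Filter.Tendsto (fun ε : ℝ => L + ε) (nhds 0) (nhds (L + 0)) :=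
          (continuous_const.add continuous_id).tendsto 0
        simpa using this.mono_left nhdsWithin_le_nhds
      · exact Filter.eventually_of_mem self_mem_nhdsWithin
          (fun ε hε => by simp at hε ⊢; linarith)
    exact ge_of_tendsto htend
      (Filter.eventually_of_mem self_mem_nhdsWithin fun ε hε => key ε hε)
  -- Step 3: contradiction if L > xstar, via IVT
  by_contra hLx
  push_neg at hLx
  obtain ⟨S, hS⟩ := hbdd
  set B := max L S + 1 with hBdef
  have hLB : L ≤ B := by
    have := le_max_left L S; linarith
  have hB0 : (0 : ℝ) ≤ B := le_trans hL0 hLB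
  have hfB : f B ≤ S := hS ⟨B, hB0, rfl⟩
  have hfBB : f B ≤ B := by
    have := le_max_right L S; linarith
  set g := fun x : ℝ => f x - x with hgdef
  have hgc : ContinuousOn g (Set.Icc L B) := by
    apply ContinuousOn.sub
    · exact hcont.mono (fun x hx => le_trans hL0 hx.1)
    · exact continuousOn_id
  have hIcc : Set.Icc (g B) (g L) ⊆ g '' Set.Icc L B :=
    intermediate_value_Icc' hLB hgc
  have h0mem : (0 : ℝ) ∈ Set.Icc (g B) (g L) := by
    constructor <;> simp [hgdef] <;> linarith
  obtain ⟨c, hc, hgc0⟩ := hIcc h0mem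
  have hfc : f c = c := by simp [hgdef] at hgc0; linarith
  have hc0 : 0 ≤ c := le_trans hL0 hc.1
  have := huniq c hc0 hfc
  have : xstar < c := lt_of_lt_of_le hLx hc.1
  linarith
end
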